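/- arXiv:1706.06385 — 3 statements merged into one kernel-verified Lean document; each statement's English description precedes it below -/
import Mathlib

section
/- Let X₁, X₂, X₃ ∈ SL(2,ℂ) with Y = X₂X₁⁻¹, tr(Y) = s, tr(X₁) = tr(X₂) = t. Set α = ω_{k-1}(s), β = ω_k(s), γ = ω_{k+1}(s) for the Chebyshev-like sequence ω. Then Y^k·X₂ = γ·X₂ - β·X₁ and Y^{-k}·X₁ = γ·X₁ - β·X₂. -/
/-!
Cayley–Hamilton in `SL(2)` gives `Y + Y⁻¹ = tr(Y) • 1`, so `j ↦ Y ^ j * X` satisfies the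
recurrence of `ω`; a solution of this second-order recurrence is determined by two consecutive
values, here `Y⁰ X₂ = X₂` and `Y⁻¹ X₂ = X₁`. The second identity is the first one for
`Y⁻¹ = X₁ X₂⁻¹`, which has the same trace as `Y`.
-/

open Matrix

section Recurrence

variable {R M : Type*} [CommRing R] [AddCommGroup M] [Module R M] {s : R}

theorem eq_zero_of_recurrence {d : ℤ → M} (hd : ∀ j, d (j + 1) = s • d j - d (j - 1))
    (h0 : d 0 = 0) (hneg : d (-1) = 0) (k : ℤ) : d k = 0 := by
  suffices ∀ k : ℤ, d k = 0 ∧ d (k - 1) = 0 from (this k).1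
  intro k
  induction k using Int.induction_on with
  | zero => exact ⟨h0, hneg⟩
  | succ i ih => simp [hd, ih.1, ih.2]
  | pred i ih =>
    have h := hd (-i - 1)
    simp only [sub_add_cancel, ih.1, ih.2, smul_zero, zero_sub, zero_eq_neg] at h
    exact ⟨ih.2, h⟩

theorem eq_smul_sub_smul_of_recurrence {w : ℤ → R} (hw0 : w 0 = 0) (hw1 : w 1 = 1)
    (hw : ∀ j, w (j + 1) = s * w j - w (j - 1)) {u : ℤ → M}
    (hu : ∀ j, u (j + 1) = s • u j - u (j - 1)) (k : ℤ) :
    u k = w (k + 1) • u 0 - w k • u (-1) := by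
  have hw_neg : w (-1) = -1 := by
    have h := hw 0
    simp only [zero_add, hw1, hw0, mul_zero, zero_sub] at h
    linear_combination h
  refine sub_eq_zero.mp (eq_zero_of_recurrence (s := s)
    (d := fun k ↦ u k - (w (k + 1) • u 0 - w k • u (-1))) (fun j ↦ ?_) ?_ ?_ k)
  · have hw' := hw (j + 1)
    rw [add_sub_cancel_right] at hw'
    simp only [sub_add_cancel, hu j, hw', hw j]
    module
  · simp [hw0, hw1]
  · simp [hw0, hw_neg]

end Recurrence

namespace Matrix.SpecialLinearGroup

variable {R : Type*} [CommRing R]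

theorem coe_add_coe_inv_fin_two (Y : SpecialLinearGroup (Fin 2) R) :
    (Y : Matrix (Fin 2) (Fin 2) R) + ↑Y⁻¹ = (Y : Matrix (Fin 2) (Fin 2) R).trace • 1 := by
  rw [coe_inv, adjugate_fin_two, trace_fin_two]
  ext i j
  fin_cases i <;> fin_cases j <;> simp [add_comm]

theorem trace_inv_fin_two (Y : SpecialLinearGroup (Fin 2) R) :
    (↑Y⁻¹ : Matrix (Fin 2) (Fin 2) R).trace = (Y : Matrix (Fin 2) (Fin 2) R).trace := by
  simp [coe_inv, adjugate_fin_two, trace_fin_two, add_comm]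

theorem coe_zpow_mul_fin_two (Y X : SpecialLinearGroup (Fin 2) R) {w : ℤ → R}
    (hw0 : w 0 = 0) (hw1 : w 1 = 1)
    (hw : ∀ j, w (j + 1) = (Y : Matrix (Fin 2) (Fin 2) R).trace * w j - w (j - 1)) (k : ℤ) :
    ((Y ^ k * X : SpecialLinearGroup (Fin 2) R) : Matrix (Fin 2) (Fin 2) R) =
      w (k + 1) • (X : Matrix (Fin 2) (Fin 2) R) - w k • ↑(Y⁻¹ * X) := by
  have step (j : ℤ) : (↑(Y ^ (j + 1) * X) : Matrix (Fin 2) (Fin 2) R) =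
      (Y : Matrix (Fin 2) (Fin 2) R).trace • ↑(Y ^ j * X) - ↑(Y ^ (j - 1) * X) := by
    rw [eq_sub_iff_add_eq, ← smul_one_mul, ← coe_add_coe_inv_fin_two, add_mul,
      ← coe_mul, ← coe_mul, ← mul_assoc, ← mul_assoc]
    congr 3 <;> group
  simpa using eq_smul_sub_smul_of_recurrence
    (u := fun j ↦ (↑(Y ^ j * X) : Matrix (Fin 2) (Fin 2) R)) hw0 hw1 hw step k

end Matrix.SpecialLinearGroup

theorem sl2_Yk_action_general (X₁ X₂ Y : Matrix.SpecialLinearGroup (Fin 2) ℂ)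
    (hY : Y = X₂ * X₁⁻¹) (s : ℂ)
    (hs : (Y : Matrix (Fin 2) (Fin 2) ℂ).trace = s)
    (w : ℤ → ℂ) (hw0 : w 0 = 0) (hw1 : w 1 = 1)
    (hrec : ∀ j : ℤ, w (j + 1) = s * w j - w (j - 1)) (k : ℤ) :
    ((Y ^ k * X₂ : Matrix.SpecialLinearGroup (Fin 2) ℂ) : Matrix (Fin 2) (Fin 2) ℂ) =
        w (k + 1) • (X₂ : Matrix (Fin 2) (Fin 2) ℂ) - w k • (X₁ : Matrix (Fin 2) (Fin 2) ℂ) ∧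
      ((Y ^ (-k) * X₁ : Matrix.SpecialLinearGroup (Fin 2) ℂ) : Matrix (Fin 2) (Fin 2) ℂ) =
        w (k + 1) • (X₁ : Matrix (Fin 2) (Fin 2) ℂ) - w k • (X₂ : Matrix (Fin 2) (Fin 2) ℂ) := by
  subst hs
  have hX₁ : Y⁻¹ * X₂ = X₁ := by rw [hY]; group
  have hX₂ : Y⁻¹⁻¹ * X₁ = X₂ := by rw [hY]; group
  refine ⟨?_, ?_⟩
  · rw [SpecialLinearGroup.coe_zpow_mul_fin_two Y X₂ hw0 hw1 hrec, hX₁]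
  · rw [← _root_.inv_zpow', SpecialLinearGroup.coe_zpow_mul_fin_two Y⁻¹ X₁ hw0 hw1
      (by rwa [SpecialLinearGroup.trace_inv_fin_two]), hX₂]

theorem sl2_Yk_action (X₁ X₂ Y : Matrix.SpecialLinearGroup (Fin 2) ℂ)
    (hY : Y = X₂ * X₁⁻¹) (t s : ℂ)
    (h1 : (X₁ : Matrix (Fin 2) (Fin 2) ℂ).trace = t)
    (h2 : (X₂ : Matrix (Fin 2) (Fin 2) ℂ).trace = t)
    (hs : (Y : Matrix (Fin 2) (Fin 2) ℂ).trace = s)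
    (w : ℤ → ℂ) (hw0 : w 0 = 0) (hw1 : w 1 = 1)
    (hrec : ∀ j : ℤ, w (j + 1) = s * w j - w (j - 1)) (k : ℤ) :
    ((Y ^ k * X₂ : Matrix.SpecialLinearGroup (Fin 2) ℂ) : Matrix (Fin 2) (Fin 2) ℂ) =
        w (k + 1) • (X₂ : Matrix (Fin 2) (Fin 2) ℂ) - w k • (X₁ : Matrix (Fin 2) (Fin 2) ℂ) ∧
      ((Y ^ (-k) * X₁ : Matrix.SpecialLinearGroup (Fin 2) ℂ) : Matrix (Fin 2) (Fin 2) ℂ) =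
        w (k + 1) • (X₁ : Matrix (Fin 2) (Fin 2) ℂ) - w k • (X₂ : Matrix (Fin 2) (Fin 2) ℂ) :=
  sl2_Yk_action_general X₁ X₂ Y hY s hs w hw0 hw1 hrec k
end

section
/- Let X₁, X₂ ∈ SL(2,ℂ) with tr(X₁) = tr(X₂) = t, Y = X₂X₁⁻¹, s = tr(Y), k ∈ ℤ, β = ω_k(s), γ = ω_{k+1}(s), and A = Y^k X₂ Y^{-k} X₁. Then tr(A) = 2 - (s + 2 - t²)(γ - β)². -/
/-!
By Cayley–Hamilton every power of `Y ∈ SL(2)` is a linear polynomial in `Y`: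
`Y^k = β Y - (sβ - γ)`, and its inverse (the adjugate) is `Y^(-k) = γ - β Y`. Writing
`X₂ = Y X₁` and expanding, `tr A` becomes a combination of traces of the words
`Y²X₁²`, `Y X₁²`, `Y²X₁YX₁`, `YX₁YX₁`, which Cayley–Hamilton reduces to polynomials in
`s = tr Y` and `t = tr X₁ = tr (Y X₁)`. The result then follows from the invariant
`γ² - sγβ + β² = 1` of the recurrence.
-/

open Matrix

theorem recurrence_quadratic_invariant {R : Type*} [CommRing R] {s : R} {w : ℤ → R}
    (hrec : ∀ j, w (j + 1) = s * w j - w (j - 1)) (k : ℤ) :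
    w (k + 1) ^ 2 - s * w (k + 1) * w k + w k ^ 2 = w 1 ^ 2 - s * w 1 * w 0 + w 0 ^ 2 := by
  induction k using Int.induction_on with
  | zero => simp
  | succ n ih =>
    have h := hrec (n + 1)
    rw [add_sub_cancel_right] at h
    linear_combination ih + (w (n + 1 + 1) - w n) * h
  | pred n ih =>
    have h := hrec (-n)
    rw [sub_add_cancel]
    linear_combination ih - (w (-n + 1) - w (-n - 1)) * h

namespace Matrix

variable {R : Type*} [CommRing R]

theorem adjugate_fin_two_eq_trace_smul_one_sub (M : Matrix (Fin 2) (Fin 2) R) :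
    adjugate M = trace M • 1 - M := by
  ext i j
  fin_cases i <;> fin_cases j <;> simp [adjugate_fin_two, trace_fin_two]

theorem mul_self_fin_two (M : Matrix (Fin 2) (Fin 2) R) :
    M * M = trace M • M - det M • 1 := by
  have h := mul_adjugate M
  rw [adjugate_fin_two_eq_trace_smul_one_sub, mul_sub, Matrix.mul_smul, mul_one] at h
  rw [← h]
  abel

theorem trace_mul_mul_self_fin_two (M P : Matrix (Fin 2) (Fin 2) R) :
    trace (M * (M * P)) = trace M * trace (M * P) - det M * trace P := by
  rw [← Matrix.mul_assoc, mul_self_fin_two, sub_mul, smul_mul_assoc, smul_mul_assoc, one_mul,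
    trace_sub, trace_smul, trace_smul, smul_eq_mul, smul_eq_mul]

theorem trace_mul_self_fin_two (M : Matrix (Fin 2) (Fin 2) R) :
    trace (M * M) = trace M ^ 2 - 2 * det M := by
  rw [mul_self_fin_two, trace_sub, trace_smul, trace_smul, trace_one, Fintype.card_fin,
    smul_eq_mul, smul_eq_mul]
  ring

theorem trace_conj_mul_fin_two {Y M : Matrix (Fin 2) (Fin 2) R} {s t β γ : R}
    (hY : det Y = 1) (hM : det M = 1) (hs : trace Y = s) (ht : trace M = t)
    (hYM : trace (Y * M) = t) (hβγ : γ ^ 2 - s * γ * β + β ^ 2 = 1) :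
    trace ((β • Y - (s * β - γ) • 1) * (Y * M) * (γ • 1 - β • Y) * M) =
      2 - (s + 2 - t ^ 2) * (γ - β) ^ 2 := by
  simp only [sub_mul, mul_sub, smul_mul_assoc, mul_smul_comm, one_mul, mul_one, trace_sub,
    trace_smul, smul_eq_mul, Matrix.mul_assoc]
  have hMM : trace (M * M) = t ^ 2 - 2 := by rw [trace_mul_self_fin_two, ht, hM]; ring
  have hYMM : trace (Y * (M * M)) = t ^ 2 - s := by
    rw [trace_mul_comm, Matrix.mul_assoc, trace_mul_mul_self_fin_two, trace_mul_comm M Y, hYM,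
      ht, hM, hs]
    ring
  have hMYM : trace (M * (Y * M)) = t ^ 2 - s := by
    rw [trace_mul_comm, Matrix.mul_assoc, hYMM]
  have hYMYM : trace (Y * (M * (Y * M))) = t ^ 2 - 2 := by
    rw [← Matrix.mul_assoc, trace_mul_self_fin_two, det_mul, hYM, hY, hM]
    ring
  rw [trace_mul_mul_self_fin_two, trace_mul_mul_self_fin_two, hYMM, hMM, hYMYM, hMYM, hY, hs]
  linear_combination 2 * hβγ

end Matrix

namespace Matrix.SpecialLinearGroup

variable {R : Type*} [CommRing R]

theorem coe_inv_fin_two (S : SpecialLinearGroup (Fin 2) R) :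
    ((S⁻¹ : SpecialLinearGroup (Fin 2) R) : Matrix (Fin 2) (Fin 2) R) =
      trace (S : Matrix (Fin 2) (Fin 2) R) • 1 - S := by
  rw [coe_inv, adjugate_fin_two_eq_trace_smul_one_sub]

variable {S : SpecialLinearGroup (Fin 2) R} {s : R} {w : ℤ → R}

theorem coe_zpow_fin_two (hs : trace (S : Matrix (Fin 2) (Fin 2) R) = s) (hw0 : w 0 = 0)
    (hw1 : w 1 = 1) (hrec : ∀ j, w (j + 1) = s * w j - w (j - 1)) (k : ℤ) :
    ((S ^ k : SpecialLinearGroup (Fin 2) R) : Matrix (Fin 2) (Fin 2) R) =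
      w k • (S : Matrix (Fin 2) (Fin 2) R) - w (k - 1) • 1 := by
  have hSS : (S : Matrix (Fin 2) (Fin 2) R) * S = s • (S : Matrix (Fin 2) (Fin 2) R) - 1 := by
    rw [mul_self_fin_two, det_coe, hs, one_smul]
  induction k using Int.induction_on with
  | zero =>
    have hm1 : w (-1) = -1 := by
      have h := hrec 0
      rw [zero_add, zero_sub, hw0, hw1] at h
      linear_combination h
    simp [hw0, hm1]
  | succ n ih =>
    rw [_root_.zpow_add_one, coe_mul, ih, add_sub_cancel_right, hrec n]
    simp only [sub_mul, smul_mul_assoc, one_mul, hSS]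
    module
  | pred n ih =>
    have h := hrec (-n - 1)
    rw [sub_add_cancel] at h
    rw [_root_.zpow_sub_one, coe_mul, ih, coe_inv_fin_two, hs,
      show w (-n - 1 - 1) = s * w (-n - 1) - w (-n) by linear_combination h]
    simp only [mul_sub, sub_mul, Matrix.mul_smul, smul_mul_assoc, mul_one, one_mul, hSS]
    module

theorem coe_zpow_neg_fin_two (hs : trace (S : Matrix (Fin 2) (Fin 2) R) = s) (hw0 : w 0 = 0)
    (hw1 : w 1 = 1) (hrec : ∀ j, w (j + 1) = s * w j - w (j - 1)) (k : ℤ) :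
    ((S ^ (-k) : SpecialLinearGroup (Fin 2) R) : Matrix (Fin 2) (Fin 2) R) =
      w (k + 1) • 1 - w k • (S : Matrix (Fin 2) (Fin 2) R) := by
  rw [_root_.zpow_neg, coe_inv_fin_two, coe_zpow_fin_two hs hw0 hw1 hrec,
    show w (k - 1) = s * w k - w (k + 1) by linear_combination hrec k]
  simp only [trace_sub, trace_smul, trace_one, Fintype.card_fin, hs, smul_eq_mul]
  module

end Matrix.SpecialLinearGroup

theorem sl2_trace_A (X₁ X₂ Y A : Matrix.SpecialLinearGroup (Fin 2) ℂ)
    (hY : Y = X₂ * X₁⁻¹) (t s : ℂ)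
    (h1 : (X₁ : Matrix (Fin 2) (Fin 2) ℂ).trace = t)
    (h2 : (X₂ : Matrix (Fin 2) (Fin 2) ℂ).trace = t)
    (hs : (Y : Matrix (Fin 2) (Fin 2) ℂ).trace = s)
    (w : ℤ → ℂ) (hw0 : w 0 = 0) (hw1 : w 1 = 1)
    (hrec : ∀ j : ℤ, w (j + 1) = s * w j - w (j - 1)) (k : ℤ)
    (β γ : ℂ) (hβ : β = w k) (hγ : γ = w (k + 1))
    (hA : A = Y ^ k * X₂ * Y ^ (-k) * X₁) :
    (A : Matrix (Fin 2) (Fin 2) ℂ).trace = 2 - (s + 2 - t ^ 2) * (γ - β) ^ 2 := by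
  subst hβ hγ hA
  have hX₂ : (X₂ : Matrix (Fin 2) (Fin 2) ℂ) = Y * X₁ := by
    rw [← Matrix.SpecialLinearGroup.coe_mul, hY, inv_mul_cancel_right]
  have hpow := Matrix.SpecialLinearGroup.coe_zpow_fin_two hs hw0 hw1 hrec k
  rw [show w (k - 1) = s * w k - w (k + 1) by linear_combination hrec k] at hpow
  have hcassini : w (k + 1) ^ 2 - s * w (k + 1) * w k + w k ^ 2 = 1 := by
    rw [recurrence_quadratic_invariant hrec, hw0, hw1]; ring
  simp only [Matrix.SpecialLinearGroup.coe_mul]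
  rw [hpow, Matrix.SpecialLinearGroup.coe_zpow_neg_fin_two hs hw0 hw1 hrec, hX₂]
  exact trace_conj_mul_fin_two (Matrix.SpecialLinearGroup.det_coe Y)
    (Matrix.SpecialLinearGroup.det_coe X₁) hs h1 (hX₂ ▸ h2) hcassini
end

section
/- Suppose X₁, X₂, X₃ ∈ SL(2,ℂ) all have trace t, and tr(X_{i+1}X_{i-1}⁻¹) = 2 for all three cyclic indices i (indices mod 3). Then X₁, X₂, X₃ have a common eigenvector; i.e., the subgroup they generate is reducible. -/
open Matrix

private lemma vec2_eq (u w : Fin 2 → ℂ) (h0 : u 0 = w 0) (h1 : u 1 = w 1) : u = w :=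
  funext fun i => by fin_cases i <;> assumption

private lemma mat2_eq_zero (P : Matrix (Fin 2) (Fin 2) ℂ) (h00 : P 0 0 = 0)
    (h01 : P 0 1 = 0) (h10 : P 1 0 = 0) (h11 : P 1 1 = 0) : P = 0 := by
  funext i j
  fin_cases i <;> fin_cases j <;> simp only [Matrix.zero_apply] <;> assumption


private lemma cross_smul (u v : Fin 2 → ℂ) (hv : v ≠ 0)
    (h : u 0 * v 1 = u 1 * v 0) : ∃ μ : ℂ, u = μ • v := by
  have hv' : v 0 ≠ 0 ∨ v 1 ≠ 0 := by
    by_contra hc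
    push_neg at hc
    exact hv (vec2_eq v 0 (by simpa using hc.1) (by simpa using hc.2))
  rcases hv' with h0 | h1
  · refine ⟨u 0 / v 0, vec2_eq _ _ ?_ ?_⟩ <;>
      simp only [Pi.smul_apply, smul_eq_mul]
    · field_simp
    · field_simp
      linear_combination -h
  · refine ⟨u 1 / v 1, vec2_eq _ _ ?_ ?_⟩ <;>
      simp only [Pi.smul_apply, smul_eq_mul]
    · field_simp
      linear_combination h
    · field_simp
private lemma det_sub_zero (M N : Matrix (Fin 2) (Fin 2) ℂ)
    (hM : M.det = 1) (hN : N.det = 1)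
    (h : (M * N.adjugate).trace = 2) : (M - N).det = 0 := by
  simp [Matrix.trace_fin_two, Matrix.mul_apply, Fin.sum_univ_two,
    Matrix.adjugate_fin_two, Matrix.det_fin_two, Matrix.sub_apply] at h ⊢
  rw [Matrix.det_fin_two] at hM hN
  linear_combination hM + hN - h

private lemma key (A P Q : Matrix (Fin 2) (Fin 2) ℂ)
    (hA : A.det = 1) (htP : P.trace = 0) (hdP : P.det = 0)
    (htQ : Q.trace = 0) (hdQ : Q.det = 0) (hPQ : (P - Q).det = 0)
    (hAP : (A + P).det = 1) (hPne : P ≠ 0) :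
    ∃ v : Fin 2 → ℂ, v ≠ 0 ∧ P *ᵥ v = 0 ∧ Q *ᵥ v = 0 ∧ ∃ μ : ℂ, A *ᵥ v = μ • v := by
  rw [Matrix.det_fin_two] at hdP hdQ hA hPQ hAP
  rw [Matrix.trace_fin_two] at htP htQ
  simp only [Matrix.sub_apply, Matrix.add_apply] at hPQ hAP
  have ha : P 0 0 * P 0 0 + P 0 1 * P 1 0 = 0 := by
    linear_combination P 0 0 * htP - hdP
  have he : Q 0 0 * Q 0 0 + Q 0 1 * Q 1 0 = 0 := by
    linear_combination Q 0 0 * htQ - hdQ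
  have hpq : 2 * (P 0 0 * Q 0 0) + P 0 1 * Q 1 0 + P 1 0 * Q 0 1 = 0 := by
    linear_combination hPQ + ha + he + (Q 0 0 - P 0 0) * htP + (P 0 0 - Q 0 0) * htQ
  have hT : P 0 0 * (A 1 1 - A 0 0) - A 0 1 * P 1 0 - A 1 0 * P 0 1 = 0 := by
    linear_combination hAP - hA - A 0 0 * htP - hdP
  by_cases hac : P 0 0 = 0 ∧ P 1 0 = 0
  · -- use v = ![b, -a]
    have hb : P 0 1 ≠ 0 := by
      intro hb0
      exact hPne (mat2_eq_zero P hac.1 hb0 hac.2 (by linear_combination htP - hac.1))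
    refine ⟨![P 0 1, -(P 0 0)], ?_, ?_, ?_, ?_⟩
    · intro h0
      exact hb (by simpa using congrFun h0 0)
    · refine vec2_eq _ _ ?_ ?_ <;>
        simp only [Matrix.mulVec, dotProduct, Fin.sum_univ_two,
          Matrix.cons_val_zero, Matrix.cons_val_one, Matrix.head_cons, Pi.zero_apply]
      · ring
      · linear_combination ha - P 0 0 * htP
    · have hz1 : Q 0 0 * P 0 1 - Q 0 1 * P 0 0 = 0 := by
        have h2 : (Q 0 0 * P 0 1 - Q 0 1 * P 0 0) ^ 2 = 0 := by
          linear_combination (P 0 1)^2 * he + (Q 0 1)^2 * ha - (P 0 1 * Q 0 1) * hpq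
        exact pow_eq_zero_iff two_ne_zero |>.mp h2
      have hz2 : Q 1 0 * P 0 1 + Q 0 0 * P 0 0 = 0 := by
        have h2 : (Q 1 0 * P 0 1 + Q 0 0 * P 0 0) ^ 2 = 0 := by
          linear_combination (-(Q 0 1 * Q 1 0)) * ha + (P 0 0)^2 * he + (P 0 1 * Q 1 0) * hpq
        exact pow_eq_zero_iff two_ne_zero |>.mp h2
      refine vec2_eq _ _ ?_ ?_ <;>
        simp only [Matrix.mulVec, dotProduct, Fin.sum_univ_two,
          Matrix.cons_val_zero, Matrix.cons_val_one, Matrix.head_cons, Pi.zero_apply]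
      · linear_combination hz1
      · linear_combination hz2 - P 0 0 * htQ
    · apply cross_smul
      · intro h0
        exact hb (by simpa using congrFun h0 0)
      · simp only [Matrix.mulVec, dotProduct, Fin.sum_univ_two,
          Matrix.cons_val_zero, Matrix.cons_val_one, Matrix.head_cons]
        linear_combination (P 0 1) * hT + (A 0 1) * ha
  · -- use v = ![a, c]
    refine ⟨![P 0 0, P 1 0], ?_, ?_, ?_, ?_⟩
    · intro h0
      exact hac ⟨by simpa using congrFun h0 0, by simpa using congrFun h0 1⟩
    · refine vec2_eq _ _ ?_ ?_ <;>
        simp only [Matrix.mulVec, dotProduct, Fin.sum_univ_two,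
          Matrix.cons_val_zero, Matrix.cons_val_one, Matrix.head_cons, Pi.zero_apply]
      · linear_combination ha
      · linear_combination P 1 0 * htP
    · have hz1 : Q 0 0 * P 0 0 + Q 0 1 * P 1 0 = 0 := by
        have h2 : (Q 0 0 * P 0 0 + Q 0 1 * P 1 0) ^ 2 = 0 := by
          linear_combination (P 0 0)^2 * he - (Q 0 1 * Q 1 0) * ha + (P 1 0 * Q 0 1) * hpq
        exact pow_eq_zero_iff two_ne_zero |>.mp h2
      have hz2 : Q 1 0 * P 0 0 - Q 0 0 * P 1 0 = 0 := by
        have h2 : (Q 1 0 * P 0 0 - Q 0 0 * P 1 0) ^ 2 = 0 := by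
          linear_combination (Q 1 0)^2 * ha + (P 1 0)^2 * he - (P 1 0 * Q 1 0) * hpq
        exact pow_eq_zero_iff two_ne_zero |>.mp h2
      refine vec2_eq _ _ ?_ ?_ <;>
        simp only [Matrix.mulVec, dotProduct, Fin.sum_univ_two,
          Matrix.cons_val_zero, Matrix.cons_val_one, Matrix.head_cons, Pi.zero_apply]
      · linear_combination hz1
      · linear_combination hz2 + P 1 0 * htQ
    · apply cross_smul
      · intro h0
        exact hac ⟨by simpa using congrFun h0 0, by simpa using congrFun h0 1⟩
      · simp only [Matrix.mulVec, dotProduct, Fin.sum_univ_two,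
          Matrix.cons_val_zero, Matrix.cons_val_one, Matrix.head_cons]
        linear_combination (-(P 1 0)) * hT - A 1 0 * ha

theorem sl2_common_eigenvector (X : Fin 3 → Matrix.SpecialLinearGroup (Fin 2) ℂ) (t : ℂ)
    (htr : ∀ i, (X i : Matrix (Fin 2) (Fin 2) ℂ).trace = t)
    (h2 : ∀ i : Fin 3, ((X (i + 1) * (X (i - 1))⁻¹ :
        Matrix.SpecialLinearGroup (Fin 2) ℂ) : Matrix (Fin 2) (Fin 2) ℂ).trace = 2) :
    ∃ v : Fin 2 → ℂ, v ≠ 0 ∧ ∀ i : Fin 3, ∃ c : ℂ,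
      (X i : Matrix (Fin 2) (Fin 2) ℂ) *ᵥ v = c • v := by
  set A : Matrix (Fin 2) (Fin 2) ℂ := ↑(X 0) with hA
  set B : Matrix (Fin 2) (Fin 2) ℂ := ↑(X 1) with hB
  set C : Matrix (Fin 2) (Fin 2) ℂ := ↑(X 2) with hC
  have hdet : ∀ i, ((X i : Matrix (Fin 2) (Fin 2) ℂ)).det = 1 := fun i => (X i).prop
  have h20 := h2 0
  have h21 := h2 1
  have h22 := h2 2
  rw [show ((0:Fin 3)+1) = 1 from rfl, show ((0:Fin 3)-1) = 2 from rfl,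
    Matrix.SpecialLinearGroup.coe_mul, Matrix.SpecialLinearGroup.coe_inv] at h20
  rw [show ((1:Fin 3)+1) = 2 from rfl, show ((1:Fin 3)-1) = 0 from rfl,
    Matrix.SpecialLinearGroup.coe_mul, Matrix.SpecialLinearGroup.coe_inv] at h21
  rw [show ((2:Fin 3)+1) = 0 from rfl, show ((2:Fin 3)-1) = 1 from rfl,
    Matrix.SpecialLinearGroup.coe_mul, Matrix.SpecialLinearGroup.coe_inv] at h22
  have dBC : (B - C).det = 0 := det_sub_zero _ _ (hdet 1) (hdet 2) h20
  have dCA : (C - A).det = 0 := det_sub_zero _ _ (hdet 2) (hdet 0) h21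
  have dAB : (A - B).det = 0 := det_sub_zero _ _ (hdet 0) (hdet 1) h22
  have dBA : (B - A).det = 0 := by
    have : (B - A).det = (A - B).det := by
      simp only [Matrix.det_fin_two, Matrix.sub_apply]; ring
    rw [this]; exact dAB
  have dCB : (C - B).det = 0 := by
    have : (C - B).det = (B - C).det := by
      simp only [Matrix.det_fin_two, Matrix.sub_apply]; ring
    rw [this]; exact dBC
  have tBA : (B - A).trace = 0 := by rw [Matrix.trace_sub, htr, htr, sub_self]
  have tCA : (C - A).trace = 0 := by rw [Matrix.trace_sub, htr, htr, sub_self]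
  have assemble : ∀ v : Fin 2 → ℂ, v ≠ 0 → (B - A) *ᵥ v = 0 → (C - A) *ᵥ v = 0 →
      (∃ μ : ℂ, A *ᵥ v = μ • v) →
      ∃ v : Fin 2 → ℂ, v ≠ 0 ∧ ∀ i : Fin 3, ∃ c : ℂ,
        (X i : Matrix (Fin 2) (Fin 2) ℂ) *ᵥ v = c • v := by
    rintro v hv hPv hQv ⟨μ, hμ⟩
    refine ⟨v, hv, ?_⟩
    have hBv : B *ᵥ v = μ • v := by
      have h' : B *ᵥ v - A *ᵥ v = 0 := by rw [← Matrix.sub_mulVec]; exact hPv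
      rw [sub_eq_zero] at h'
      rw [h', hμ]
    have hCv : C *ᵥ v = μ • v := by
      have h' : C *ᵥ v - A *ᵥ v = 0 := by rw [← Matrix.sub_mulVec]; exact hQv
      rw [sub_eq_zero] at h'
      rw [h', hμ]
    intro i
    fin_cases i
    · exact ⟨μ, hμ⟩
    · exact ⟨μ, hBv⟩
    · exact ⟨μ, hCv⟩
  by_cases hP0 : B - A = 0
  · by_cases hQ0 : C - A = 0
    · obtain ⟨μ, hμ⟩ := Module.End.exists_eigenvalue (Matrix.mulVecLin A)
      obtain ⟨v, hv⟩ := hμ.exists_hasEigenvector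
      refine assemble v hv.2 ?_ ?_ ⟨μ, ?_⟩
      · rw [hP0, Matrix.zero_mulVec]
      · rw [hQ0, Matrix.zero_mulVec]
      · have := hv.apply_eq_smul
        rwa [Matrix.mulVecLin_apply] at this
    · obtain ⟨v, hv, hPv, hQv, hμ⟩ := key A (C - A) (B - A) (hdet 0) tCA dCA tBA dBA
        (by rw [sub_sub_sub_cancel_right]; exact dCB)
        (by rw [add_sub_cancel]; exact hdet 2) hQ0
      exact assemble v hv hQv hPv hμ
  · obtain ⟨v, hv, hPv, hQv, hμ⟩ := key A (B - A) (C - A) (hdet 0) tBA dBA tCA dCA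
      (by rw [sub_sub_sub_cancel_right]; exact dBC)
      (by rw [add_sub_cancel]; exact hdet 1) hP0
    exact assemble v hv hPv hQv hμ
end
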